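/- arXiv:2410.20524 — 2 statements merged into one kernel-verified Lean document; each statement's English description precedes it below -/
import Mathlib

section
/- Let B₁ and B₂ be simple skew left braces and α : (B₂,∘) → Aut(B₁,+,∘) a non-trivial group homomorphism. Suppose J is an ideal of B₁ ⋊_α B₂ with J ≠ {(0,0)}, J ≠ B₁ ⋊_α B₂, and J ≠ B₁ × {0}. Then for every (a₁,a₂) ∈ J one has α_{a₂} = i_{a₁} as maps B₁ → B₁, where i_{a₁}(h) := a₁⁻ ∘ h ∘ a₁ and a₁⁻ is the inverse of a₁ in (B₁,∘). -/
/-- A *skew left brace* is a set with two group structures `(B,+)` and `(B,∘)`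
(the latter written multiplicatively) satisfying `a∘(b+c) = a∘b - a + a∘c`.
The two identity elements automatically coincide. -/
class SkewLeftBrace (B : Type*) extends AddGroup B, Group B where
  mul_add_eq : ∀ a b c : B, a * (b + c) = a * b - a + a * c

namespace SkewLeftBrace

variable {B : Type*} [SkewLeftBrace B]

/-- The map `λ_a : b ↦ -a + a∘b`. -/
def lmap (a b : B) : B := -a + a * b

/-- The brace star operation `a*b := -a + a∘b - b`. -/
def bstar (a b : B) : B := -a + a * b - b

/-- `X*Y`: the additive subgroup generated by all `bstar x y`, `x ∈ X`, `y ∈ Y`,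
regarded as a set. -/
def setStar (X Y : Set B) : Set B :=
  ↑(AddSubgroup.closure {z : B | ∃ x ∈ X, ∃ y ∈ Y, z = bstar x y})

/-- Pointwise sum of two subsets. -/
def setSum (X Y : Set B) : Set B := {w : B | ∃ x ∈ X, ∃ y ∈ Y, w = x + y}

/-- `X^Z := {z + x - z : x ∈ X, z ∈ Z}`. -/
def setConj (X Z : Set B) : Set B := {w : B | ∃ x ∈ X, ∃ z ∈ Z, w = z + x + -z}

/-- An ideal of a skew left brace: a subgroup of `(B,+)` which is normal in both
`(B,+)` and `(B,∘)` and invariant under all the maps `λ_a`. -/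
structure IsIdeal (I : Set B) : Prop where
  zero_mem : (0 : B) ∈ I
  add_mem : ∀ ⦃x y : B⦄, x ∈ I → y ∈ I → x + y ∈ I
  neg_mem : ∀ ⦃x : B⦄, x ∈ I → -x ∈ I
  add_conj_mem : ∀ (b : B) ⦃x : B⦄, x ∈ I → b + x + -b ∈ I
  mul_mem : ∀ ⦃x y : B⦄, x ∈ I → y ∈ I → x * y ∈ I
  inv_mem : ∀ ⦃x : B⦄, x ∈ I → x⁻¹ ∈ I
  mul_conj_mem : ∀ (b : B) ⦃x : B⦄, x ∈ I → b * x * b⁻¹ ∈ I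
  lmap_mem : ∀ (a : B) ⦃x : B⦄, x ∈ I → lmap a x ∈ I

/-- A minimal ideal: a nonzero ideal whose only sub-ideals are `{0}` and itself. -/
def IsMinimalIdeal (I : Set B) : Prop :=
  IsIdeal I ∧ I ≠ {0} ∧ ∀ J : Set B, IsIdeal J → J ⊆ I → J = {0} ∨ J = I

theorem mul_zero' (a : B) : a * (0 : B) = a := by
  have h := SkewLeftBrace.mul_add_eq a (0 : B) (0 : B)
  rw [add_zero] at h
  have h2 : a * (0:B) - a = 0 := (right_eq_add.mp h)
  exact sub_eq_zero.mp h2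

theorem zero_eq_one : (0 : B) = 1 := by
  have h := mul_zero' (1 : B)
  rw [one_mul] at h
  exact h

theorem IsIdeal.one_mem {I : Set B} (h : IsIdeal I) : (1 : B) ∈ I :=
  (zero_eq_one (B := B)) ▸ h.zero_mem

variable (B) in
/-- A skew left brace is *semiprime* if `I*I ≠ {0}` for every nonzero ideal `I`. -/
def Semiprime : Prop := ∀ I : Set B, IsIdeal I → I ≠ {0} → setStar I I ≠ {0}

variable (B) in
/-- A skew left brace is *prime*... (and) *simple* if its only ideals are `{0}` and `B`,
and these are distinct. -/
def Simple : Prop :=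
  ({0} : Set B) ≠ Set.univ ∧ ∀ I : Set B, IsIdeal I → I = {0} ∨ I = Set.univ

variable (B) in
/-- A skew left brace is *Artinian* if every descending chain of ideals stabilizes. -/
def Artinian : Prop :=
  ∀ f : ℕ → Set B, (∀ n, IsIdeal (f n)) → (∀ n, f (n + 1) ⊆ f n) →
    ∃ N, ∀ n, N ≤ n → f n = f N

/-- The `*`-products of copies of a fixed set `I`. -/
inductive IsStarPowerOf (I : Set B) : Set B → Prop
  | base : IsStarPowerOf I I
  | star {X Y : Set B} : IsStarPowerOf I X → IsStarPowerOf I Y →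
      IsStarPowerOf I (setStar X Y)

variable (B) in
/-- A skew left brace is *strongly semiprime* if for every nonzero ideal `I`, every
`*`-product of copies of `I` is nonzero. -/
def StronglySemiprime : Prop :=
  ∀ I : Set B, IsIdeal I → I ≠ {0} → ∀ X : Set B, IsStarPowerOf I X → X ≠ {0}

/-- The `*`-products of nonzero ideals. -/
inductive IsStarProdOfNonzeroIdeals : Set B → Prop
  | ideal {I : Set B} : IsIdeal I → I ≠ {0} → IsStarProdOfNonzeroIdeals I
  | star {X Y : Set B} : IsStarProdOfNonzeroIdeals X → IsStarProdOfNonzeroIdeals Y →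
      IsStarProdOfNonzeroIdeals (setStar X Y)

variable (B) in
/-- A skew left brace is *strongly prime* if every `*`-product of nonzero ideals is nonzero. -/
def StronglyPrime : Prop :=
  ∀ X : Set B, IsStarProdOfNonzeroIdeals X → X ≠ {0}

end SkewLeftBrace
namespace SkewLeftBrace

variable {B : Type*} [SkewLeftBrace B]

/-- An ideal, regarded as a skew left brace with the restricted operations. -/
def IsIdeal.brace {I : Set B} (h : IsIdeal I) : SkewLeftBrace I :=
  letI : Zero I := ⟨⟨0, h.zero_mem⟩⟩
  letI : Add I := ⟨fun x y => ⟨x.1 + y.1, h.add_mem x.2 y.2⟩⟩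
  letI : Neg I := ⟨fun x => ⟨-x.1, h.neg_mem x.2⟩⟩
  letI : One I := ⟨⟨1, h.one_mem⟩⟩
  letI : Mul I := ⟨fun x y => ⟨x.1 * y.1, h.mul_mem x.2 y.2⟩⟩
  letI : Inv I := ⟨fun x => ⟨x.1⁻¹, h.inv_mem x.2⟩⟩
  { add := (· + ·)
    zero := 0
    neg := (- ·)
    nsmul := nsmulRec
    zsmul := zsmulRec
    add_assoc := fun a b c => Subtype.ext (add_assoc a.1 b.1 c.1)
    zero_add := fun a => Subtype.ext (zero_add a.1)
    add_zero := fun a => Subtype.ext (add_zero a.1)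
    neg_add_cancel := fun a => Subtype.ext (neg_add_cancel a.1)
    mul := (· * ·)
    one := 1
    inv := (·⁻¹)
    npow := npowRec
    zpow := zpowRec
    mul_assoc := fun a b c => Subtype.ext (mul_assoc a.1 b.1 c.1)
    one_mul := fun a => Subtype.ext (one_mul a.1)
    mul_one := fun a => Subtype.ext (mul_one a.1)
    inv_mul_cancel := fun a => Subtype.ext (inv_mul_cancel a.1)
    mul_add_eq := fun a b c =>
      Subtype.ext (by
        show a.1 * (b.1 + c.1) = a.1 * b.1 + -a.1 + a.1 * c.1
        rw [SkewLeftBrace.mul_add_eq, sub_eq_add_neg]) }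

/-- The direct product of two skew left braces, with componentwise operations. -/
def prodBrace (B₁ B₂ : Type*) [SkewLeftBrace B₁] [SkewLeftBrace B₂] :
    SkewLeftBrace (B₁ × B₂) :=
  { (inferInstance : AddGroup (B₁ × B₂)), (inferInstance : Group (B₁ × B₂)) with
    mul_add_eq := fun a b c =>
      Prod.ext (by simp [SkewLeftBrace.mul_add_eq]) (by simp [SkewLeftBrace.mul_add_eq]) }

/-- Two skew left braces are isomorphic if there is a bijection preserving `+` and `∘`. -/
def IsBraceIsomorphic (A C : Type*) [SkewLeftBrace A] [SkewLeftBrace C] : Prop :=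
  ∃ f : A ≃ C, (∀ x y : A, f (x + y) = f x + f y) ∧ (∀ x y : A, f (x * y) = f x * f y)

/-- A group homomorphism from `(B₂,∘)` to the automorphism group `Aut(B₁,+,∘)` of the
skew left brace `B₁`, presented as an action `act : B₂ → B₁ → B₁` by skew left brace
automorphisms. -/
structure BraceActionHom (B₂ B₁ : Type*) [SkewLeftBrace B₂] [SkewLeftBrace B₁] where
  act : B₂ → B₁ → B₁
  act_bijective : ∀ a : B₂, Function.Bijective (act a)
  act_add : ∀ (a : B₂) (x y : B₁), act a (x + y) = act a x + act a y
  act_mul : ∀ (a : B₂) (x y : B₁), act a (x * y) = act a x * act a y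
  act_hom : ∀ (a b : B₂) (x : B₁), act (a * b) x = act a (act b x)
  act_one : ∀ x : B₁, act (1 : B₂) x = x

variable {B₁ B₂ : Type*} [SkewLeftBrace B₁] [SkewLeftBrace B₂]

theorem BraceActionHom.act_one' (α : BraceActionHom B₂ B₁) (a : B₂) :
    α.act a (1 : B₁) = 1 := by
  have h := α.act_mul a 1 1
  rw [mul_one] at h
  exact mul_eq_left.mp h.symm

/-- The underlying type of the semidirect product of two skew left braces. -/
@[ext]
structure SDP (B₁ B₂ : Type*) where
  fst : B₁
  snd : B₂

/-- The semidirect product `B₁ ⋊_α B₂` of skew left braces: the additive group is the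
direct product, while `(a₁,a₂) ∘ (b₁,b₂) = (a₁ ∘ α_{a₂}(b₁), a₂ ∘ b₂)`. -/
def BraceActionHom.sdp (α : BraceActionHom B₂ B₁) : SkewLeftBrace (SDP B₁ B₂) :=
  letI : Zero (SDP B₁ B₂) := ⟨⟨0, 0⟩⟩
  letI : Add (SDP B₁ B₂) := ⟨fun p q => ⟨p.fst + q.fst, p.snd + q.snd⟩⟩
  letI : Neg (SDP B₁ B₂) := ⟨fun p => ⟨-p.fst, -p.snd⟩⟩
  letI : One (SDP B₁ B₂) := ⟨⟨1, 1⟩⟩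
  letI : Mul (SDP B₁ B₂) := ⟨fun p q => ⟨p.fst * α.act p.snd q.fst, p.snd * q.snd⟩⟩
  letI : Inv (SDP B₁ B₂) := ⟨fun p => ⟨α.act p.snd⁻¹ p.fst⁻¹, p.snd⁻¹⟩⟩
  { add := (· + ·)
    zero := 0
    neg := (- ·)
    nsmul := nsmulRec
    zsmul := zsmulRec
    add_assoc := fun a b c =>
      SDP.ext (add_assoc a.fst b.fst c.fst) (add_assoc a.snd b.snd c.snd)
    zero_add := fun a => SDP.ext (zero_add a.fst) (zero_add a.snd)
    add_zero := fun a => SDP.ext (add_zero a.fst) (add_zero a.snd)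
    neg_add_cancel := fun a => SDP.ext (neg_add_cancel a.fst) (neg_add_cancel a.snd)
    mul := (· * ·)
    one := 1
    inv := (·⁻¹)
    npow := npowRec
    zpow := zpowRec
    mul_assoc := fun a b c =>
      SDP.ext
        (by show (a.fst * α.act a.snd b.fst) * α.act (a.snd * b.snd) c.fst =
              a.fst * α.act a.snd (b.fst * α.act b.snd c.fst)
            rw [α.act_hom, α.act_mul, mul_assoc])
        (mul_assoc a.snd b.snd c.snd)
    one_mul := fun a =>
      SDP.ext (by show (1 : B₁) * α.act 1 a.fst = a.fst; rw [α.act_one, one_mul])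
        (one_mul a.snd)
    mul_one := fun a =>
      SDP.ext (by show a.fst * α.act a.snd (1 : B₁) = a.fst; rw [α.act_one', mul_one])
        (mul_one a.snd)
    inv_mul_cancel := fun a =>
      SDP.ext
        (by show α.act a.snd⁻¹ a.fst⁻¹ * α.act a.snd⁻¹ a.fst = 1
            rw [← α.act_mul, inv_mul_cancel, α.act_one'])
        (inv_mul_cancel a.snd)
    mul_add_eq := fun a b c =>
      SDP.ext
        (by show a.fst * α.act a.snd (b.fst + c.fst) =
              a.fst * α.act a.snd b.fst + -a.fst + a.fst * α.act a.snd c.fst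
            rw [α.act_add, SkewLeftBrace.mul_add_eq, sub_eq_add_neg])
        (by show a.snd * (b.snd + c.snd) = a.snd * b.snd + -a.snd + a.snd * c.snd
            rw [SkewLeftBrace.mul_add_eq, sub_eq_add_neg]) }

end SkewLeftBrace

/-!
The fibre `{x | (x, 1) ∈ J}` is the preimage of `J` under the brace homomorphism `x ↦ (x, 1)`,
and the projection of `J` to `B₂` is its image under the surjective brace homomorphism `snd`;
both are therefore ideals. If the fibre is `{0}`, the commutator of `(h, 1)` and `(a₁, a₂) ∈ J`
lies in `J` (normality) and has second coordinate `1`, so it is trivial; comparing first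
coordinates gives `α_{a₂}(h) = a₁⁻ ∘ h ∘ a₁`. If the fibre is all of `B₁`, then `J` is the full
preimage of its projection, hence `B₁ × {0}` or the whole brace.
-/

namespace SkewLeftBrace

variable {A C : Type*} [SkewLeftBrace A] [SkewLeftBrace C]

structure IsBraceHom (f : A → C) : Prop where
  map_add : ∀ x y, f (x + y) = f x + f y
  map_mul : ∀ x y, f (x * y) = f x * f y

namespace IsBraceHom

variable {f : A → C} (hf : IsBraceHom f)
include hf

theorem map_zero : f 0 = 0 := (AddMonoidHom.mk' f hf.map_add).map_zero

theorem map_neg (x : A) : f (-x) = -f x := (AddMonoidHom.mk' f hf.map_add).map_neg x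

theorem map_inv (x : A) : f x⁻¹ = (f x)⁻¹ := (MonoidHom.mk' f hf.map_mul).map_inv x

theorem map_lmap (a x : A) : f (lmap a x) = lmap (f a) (f x) := by
  simp only [lmap, hf.map_add, hf.map_neg, hf.map_mul]

end IsBraceHom

theorem IsIdeal.preimage {I : Set C} (hI : IsIdeal I) {f : A → C} (hf : IsBraceHom f) :
    IsIdeal (f ⁻¹' I) where
  zero_mem := by rw [Set.mem_preimage, hf.map_zero]; exact hI.zero_mem
  add_mem := by
    intro x y hx hy
    rw [Set.mem_preimage, hf.map_add]; exact hI.add_mem hx hy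
  neg_mem := by
    intro x hx
    rw [Set.mem_preimage, hf.map_neg]; exact hI.neg_mem hx
  add_conj_mem b := by
    intro x hx
    rw [Set.mem_preimage, hf.map_add, hf.map_add, hf.map_neg]; exact hI.add_conj_mem _ hx
  mul_mem := by
    intro x y hx hy
    rw [Set.mem_preimage, hf.map_mul]; exact hI.mul_mem hx hy
  inv_mem := by
    intro x hx
    rw [Set.mem_preimage, hf.map_inv]; exact hI.inv_mem hx
  mul_conj_mem b := by
    intro x hx
    rw [Set.mem_preimage, hf.map_mul, hf.map_mul, hf.map_inv]; exact hI.mul_conj_mem _ hx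
  lmap_mem a := by
    intro x hx
    rw [Set.mem_preimage, hf.map_lmap]; exact hI.lmap_mem _ hx

theorem IsIdeal.image {I : Set A} (hI : IsIdeal I) {f : A → C} (hf : IsBraceHom f)
    (hsurj : Function.Surjective f) : IsIdeal (f '' I) where
  zero_mem := ⟨0, hI.zero_mem, hf.map_zero⟩
  add_mem := by
    rintro _ _ ⟨x, hx, rfl⟩ ⟨y, hy, rfl⟩
    exact ⟨x + y, hI.add_mem hx hy, hf.map_add x y⟩
  neg_mem := by
    rintro _ ⟨x, hx, rfl⟩
    exact ⟨-x, hI.neg_mem hx, hf.map_neg x⟩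
  add_conj_mem b := by
    obtain ⟨b, rfl⟩ := hsurj b
    rintro _ ⟨x, hx, rfl⟩
    exact ⟨b + x + -b, hI.add_conj_mem b hx, by rw [hf.map_add, hf.map_add, hf.map_neg]⟩
  mul_mem := by
    rintro _ _ ⟨x, hx, rfl⟩ ⟨y, hy, rfl⟩
    exact ⟨x * y, hI.mul_mem hx hy, hf.map_mul x y⟩
  inv_mem := by
    rintro _ ⟨x, hx, rfl⟩
    exact ⟨x⁻¹, hI.inv_mem hx, hf.map_inv x⟩
  mul_conj_mem b := by
    obtain ⟨b, rfl⟩ := hsurj b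
    rintro _ ⟨x, hx, rfl⟩
    exact ⟨b * x * b⁻¹, hI.mul_conj_mem b hx, by rw [hf.map_mul, hf.map_mul, hf.map_inv]⟩
  lmap_mem a := by
    obtain ⟨a, rfl⟩ := hsurj a
    rintro _ ⟨x, hx, rfl⟩
    exact ⟨lmap a x, hI.lmap_mem a hx, hf.map_lmap a x⟩

namespace BraceActionHom

variable {B₁ B₂ : Type*} [SkewLeftBrace B₁] [SkewLeftBrace B₂] (α : BraceActionHom B₂ B₁)

theorem isBraceHom_mk_one : @IsBraceHom B₁ (SDP B₁ B₂) _ α.sdp (SDP.mk · 1) := by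
  let _ := α.sdp
  refine ⟨fun x y => SDP.ext rfl ?_, fun x y => SDP.ext ?_ (mul_one 1).symm⟩
  · show (1 : B₂) = 1 + 1
    rw [← zero_eq_one, add_zero]
  · show x * y = x * α.act 1 y
    rw [α.act_one]

theorem isBraceHom_snd : @IsBraceHom (SDP B₁ B₂) B₂ α.sdp _ SDP.snd :=
  let _ := α.sdp
  ⟨fun _ _ => rfl, fun _ _ => rfl⟩

theorem ideal_eq_preimage_snd_image {J : Set (SDP B₁ B₂)} (hJ : @IsIdeal _ α.sdp J)
    (hfiber : (SDP.mk · (1 : B₂)) ⁻¹' J = Set.univ) : J = SDP.snd ⁻¹' (SDP.snd '' J) := by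
  let _ := α.sdp
  refine (Set.subset_preimage_image _ _).antisymm ?_
  rintro p ⟨q, hq, hqp⟩
  have hsum : SDP.mk (p.fst - q.fst) 1 + q = p :=
    SDP.ext (sub_add_cancel _ _) (by show 1 + q.snd = p.snd; rw [← zero_eq_one, zero_add, hqp])
  rw [← hsum]
  exact hJ.add_mem (Set.eq_univ_iff_forall.mp hfiber _) hq

open scoped commutatorElement in
theorem act_eq_conj_of_mem_ideal {J : Set (SDP B₁ B₂)} (hJ : @IsIdeal _ α.sdp J)
    (hfiber : (SDP.mk · (1 : B₂)) ⁻¹' J = {0}) {p : SDP B₁ B₂} (hp : p ∈ J) (h : B₁) :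
    α.act p.snd h = p.fst⁻¹ * h * p.fst := by
  let _ := α.sdp
  set c := ⁅SDP.mk h (1 : B₂), p⁆
  have hc : c ∈ J := hJ.mul_mem (hJ.mul_conj_mem _ hp) (hJ.inv_mem hp)
  have hc_snd : c.snd = 1 := by
    show 1 * p.snd * 1⁻¹ * p.snd⁻¹ = 1
    rw [one_mul, inv_one, mul_one, mul_inv_cancel]
  have hc_fst : c.fst = 1 := by
    have : c.fst ∈ (SDP.mk · (1 : B₂)) ⁻¹' J := by
      rw [Set.mem_preimage, ← hc_snd]; exact hc
    rw [hfiber] at this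
    exact this.trans zero_eq_one
  have hcomm : SDP.mk h 1 * p = p * SDP.mk h 1 :=
    commutatorElement_eq_one_iff_mul_comm.mp (SDP.ext hc_fst hc_snd)
  have hcomm_fst : h * p.fst = p.fst * α.act p.snd h :=
    calc h * p.fst = h * α.act 1 p.fst := by rw [α.act_one]
      _ = p.fst * α.act p.snd h := congrArg SDP.fst hcomm
  rw [mul_assoc, hcomm_fst, inv_mul_cancel_left]

end BraceActionHom

end SkewLeftBrace

open SkewLeftBrace

theorem act_eq_inner_of_mem_ideal_general {B₁ B₂ : Type*} [SkewLeftBrace B₁] [SkewLeftBrace B₂]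
    (h₁ : SkewLeftBrace.Simple B₁) (h₂ : SkewLeftBrace.Simple B₂)
    (α : BraceActionHom B₂ B₁)
    (J : Set (SDP B₁ B₂)) (hJ : @IsIdeal _ α.sdp J)
    (hJU : J ≠ Set.univ)
    (hJB₁ : J ≠ {p : SDP B₁ B₂ | p.snd = 0}) :
    ∀ p ∈ J, ∀ h : B₁, α.act p.snd h = p.fst⁻¹ * h * p.fst := by
  let _ := α.sdp
  rcases h₁.2 _ (hJ.preimage α.isBraceHom_mk_one) with hfiber | hfiber
  · exact fun p hp => α.act_eq_conj_of_mem_ideal hJ hfiber hp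
  have hJ_eq := α.ideal_eq_preimage_snd_image hJ hfiber
  rcases h₂.2 _ (hJ.image α.isBraceHom_snd fun b => ⟨⟨1, b⟩, rfl⟩) with hsnd | hsnd
  · exact absurd (by rw [hJ_eq, hsnd]; rfl) hJB₁
  · exact absurd (by rw [hJ_eq, hsnd, Set.preimage_univ]) hJU

/-- If `J` is a non-trivial ideal of `B₁ ⋊_α B₂` different from `B₁ × {0}`, with `B₁`,
`B₂` simple and `α` non-trivial, then `α_{a₂} = i_{a₁}` for every `(a₁,a₂) ∈ J`. -/
theorem act_eq_inner_of_mem_ideal {B₁ B₂ : Type*} [SkewLeftBrace B₁] [SkewLeftBrace B₂]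
    (h₁ : SkewLeftBrace.Simple B₁) (h₂ : SkewLeftBrace.Simple B₂)
    (α : BraceActionHom B₂ B₁)
    (hα : ∃ (a : B₂) (x : B₁), α.act a x ≠ x)
    (J : Set (SDP B₁ B₂)) (hJ : @IsIdeal _ α.sdp J)
    (hJ0 : J ≠ {SDP.mk 0 0}) (hJU : J ≠ Set.univ)
    (hJB₁ : J ≠ {p : SDP B₁ B₂ | p.snd = 0}) :
    ∀ p ∈ J, ∀ h : B₁, α.act p.snd h = p.fst⁻¹ * h * p.fst :=
  act_eq_inner_of_mem_ideal_general h₁ h₂ α J hJ hJU hJB₁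
end

section
/- Let B be a skew left brace whose ideals are exactly {0}, J, and B, where {0}, J, B are pairwise distinct. Suppose that J, regarded as a skew left brace with the restricted operations, is simple and is not a trivial skew left brace (i.e. the operations + and ∘ do not coincide on J). Then B is strongly prime. -/
open SkewLeftBrace

/-!
For a skew left brace `A`, the product `A * A` is always an ideal of `A`. Applied to the simple
brace `J`, it is either `0`, which would make `J` trivial, or all of `J`; so `J * J = J`. Since
every nonzero ideal of `B` contains `J`, induction on `*`-products shows that each of them
contains `J ≠ 0`.
-/

namespace SkewLeftBrace

variable {A : Type*} [SkewLeftBrace A]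

theorem mul_neg_eq (a b : A) : a * -b = a - a * b + a := by
  have h := mul_add_eq a b (-b)
  rw [add_neg_cancel, mul_zero'] at h
  calc a * -b = -(a * b - a) + (a * b - a + a * -b) := by rw [neg_add_cancel_left]
    _ = a - a * b + a := by rw [← h, neg_sub]

def lmapHom (a : A) : A →+ A :=
  AddMonoidHom.mk' (lmap a) fun b c => by
    simp only [lmap, mul_add_eq, sub_eq_add_neg, add_assoc]

theorem mul_eq_add_lmap (x y : A) : x * y = x + lmap x y := by
  rw [lmap, add_neg_cancel_left]

theorem inv_eq_lmap_neg (x : A) : x⁻¹ = lmap x⁻¹ (-x) := by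
  simp [lmap, mul_neg_eq, ← zero_eq_one, sub_eq_add_neg]

theorem lmap_bstar (a b c : A) : lmap a (bstar b c) = bstar (a * b) c - bstar a c := by
  simp [lmap, bstar, sub_eq_add_neg, mul_add_eq, mul_neg_eq, mul_assoc, add_assoc]

theorem add_bstar_neg (a b c : A) : b + bstar a c - b = -bstar a b + bstar a (b + c) := by
  simp [bstar, sub_eq_add_neg, mul_add_eq, add_assoc]

theorem mul_mul_inv_eq (b x : A) : b * x * b⁻¹ = b + lmap b (x + bstar x b⁻¹) - b := by
  simp [lmap, bstar, sub_eq_add_neg, mul_add_eq, mul_neg_eq, mul_assoc, add_assoc,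
    ← zero_eq_one]

theorem bstar_mem_setStar {X Y : Set A} {x y : A} (hx : x ∈ X) (hy : y ∈ Y) :
    bstar x y ∈ setStar X Y :=
  AddSubgroup.subset_closure ⟨x, hx, y, hy, rfl⟩

theorem setStar_mono {X X' Y Y' : Set A} (hX : X ⊆ X') (hY : Y ⊆ Y') :
    setStar X Y ⊆ setStar X' Y' :=
  AddSubgroup.closure_mono fun _ ⟨x, hx, y, hy, hz⟩ => ⟨x, hX hx, y, hY hy, hz⟩

theorem map_mem_setStar {X Y : Set A} (f : A →+ A)
    (hf : ∀ x ∈ X, ∀ y ∈ Y, f (bstar x y) ∈ setStar X Y) {z : A} (hz : z ∈ setStar X Y) :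
    f z ∈ setStar X Y := by
  have hle : (AddSubgroup.closure {z | ∃ x ∈ X, ∃ y ∈ Y, z = bstar x y}).map f ≤
      AddSubgroup.closure {z | ∃ x ∈ X, ∃ y ∈ Y, z = bstar x y} := by
    rw [AddMonoidHom.map_closure, AddSubgroup.closure_le]
    rintro _ ⟨_, ⟨x, hx, y, hy, rfl⟩, rfl⟩
    exact hf x hx y hy
  exact hle ⟨z, hz, rfl⟩

variable (A) in
theorem isIdeal_setStar_univ : IsIdeal (setStar (Set.univ : Set A) Set.univ) := by
  set S := setStar (Set.univ : Set A) Set.univ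
  have hS : ∀ a b : A, bstar a b ∈ S := fun a b => bstar_mem_setStar trivial trivial
  have hadd : ∀ ⦃x y⦄, x ∈ S → y ∈ S → x + y ∈ S := fun _ _ => AddSubgroup.add_mem _
  have hlmap : ∀ (a : A) ⦃x⦄, x ∈ S → lmap a x ∈ S := fun a _ =>
    map_mem_setStar (lmapHom a) fun b _ c _ => by
      rw [lmapHom, AddMonoidHom.mk'_apply, lmap_bstar]
      exact AddSubgroup.sub_mem _ (hS _ _) (hS _ _)
  have hconj : ∀ (b : A) ⦃x⦄, x ∈ S → b + x + -b ∈ S := fun b _ =>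
    map_mem_setStar (AddMonoidHom.mk' (fun x => b + x + -b) fun _ _ => by
        simp only [add_assoc, neg_add_cancel_left]) fun a _ c _ => by
      rw [AddMonoidHom.mk'_apply, ← sub_eq_add_neg, add_bstar_neg]
      exact hadd (AddSubgroup.neg_mem _ (hS _ _)) (hS _ _)
  refine ⟨AddSubgroup.zero_mem _, hadd, fun _ => AddSubgroup.neg_mem _, hconj, ?_, ?_, ?_, hlmap⟩
  · intro x y hx hy
    rw [mul_eq_add_lmap]
    exact hadd hx (hlmap x hy)
  · intro x hx
    rw [inv_eq_lmap_neg]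
    exact hlmap _ (AddSubgroup.neg_mem _ hx)
  · intro b x hx
    rw [mul_mul_inv_eq, sub_eq_add_neg]
    exact hconj b (hlmap b (hadd hx (hS _ _)))

theorem setStar_univ_eq_univ_of_simple (hA : Simple A) (hnontriv : ∃ a b : A, a * b ≠ a + b) :
    setStar (Set.univ : Set A) Set.univ = Set.univ := by
  refine (hA.2 _ (isIdeal_setStar_univ A)).resolve_left fun h => ?_
  obtain ⟨a, b, hab⟩ := hnontriv
  have hzero : bstar a b ∈ ({0} : Set A) := h ▸ bstar_mem_setStar (Set.mem_univ a) trivial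
  rw [Set.mem_singleton_iff, bstar, sub_eq_zero, neg_add_eq_iff_eq_add] at hzero
  exact hab hzero

section Ideal

variable {B : Type*} [SkewLeftBrace B]

theorem IsIdeal.image_setStar_univ {I : Set B} (hI : IsIdeal I) :
    Subtype.val '' @setStar I hI.brace Set.univ Set.univ = setStar I I := by
  let := hI.brace
  let val : I →+ B := AddMonoidHom.mk' Subtype.val fun _ _ => rfl
  have hgen : val '' {z | ∃ x ∈ Set.univ, ∃ y ∈ Set.univ, z = bstar x y} =
      {z | ∃ x ∈ I, ∃ y ∈ I, z = bstar x y} := by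
    ext z
    constructor
    · rintro ⟨_, ⟨x, -, y, -, rfl⟩, rfl⟩
      exact ⟨x, x.2, y, y.2, (sub_eq_add_neg _ _).symm⟩
    · rintro ⟨x, hx, y, hy, rfl⟩
      exact ⟨bstar ⟨x, hx⟩ ⟨y, hy⟩, ⟨_, trivial, _, trivial, rfl⟩, (sub_eq_add_neg _ _).symm⟩
  rw [setStar, setStar, ← hgen, ← AddMonoidHom.map_closure, AddSubgroup.coe_map]
  rfl

theorem stronglyPrime_of_subset_ideals {J : Set B} (hJ : IsIdeal J) (hJ0 : J ≠ {0})
    (hJJ : J ⊆ setStar J J) (hmin : ∀ I, IsIdeal I → I ≠ {0} → J ⊆ I) : StronglyPrime B := by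
  intro X hX
  have hJX : J ⊆ X := by
    induction hX with
    | ideal hI hI0 => exact hmin _ hI hI0
    | star _ _ ihX ihY => exact hJJ.trans (setStar_mono ihX ihY)
  rintro rfl
  exact hJ0 (Set.Subset.antisymm hJX (Set.singleton_subset_iff.mpr hJ.zero_mem))

end Ideal

end SkewLeftBrace

theorem stronglyPrime_of_unique_simple_ideal_general {B : Type*} [SkewLeftBrace B]
    (J : Set B) (hJ : IsIdeal J)
    (h0J : ({0} : Set B) ≠ J)
    (hclass : ∀ I : Set B, IsIdeal I → I = {0} ∨ I = J ∨ I = Set.univ)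
    (hsimple : @SkewLeftBrace.Simple _ hJ.brace)
    (hnontriv : ∃ a ∈ J, ∃ b ∈ J, a * b ≠ a + b) :
    SkewLeftBrace.StronglyPrime B := by
  let := hJ.brace
  have hJ_nontriv : ∃ a b : J, a * b ≠ a + b := by
    obtain ⟨a, ha, b, hb, hab⟩ := hnontriv
    exact ⟨⟨a, ha⟩, ⟨b, hb⟩, fun h => hab (congrArg Subtype.val h)⟩
  have hJJ : setStar J J = J := by
    rw [← hJ.image_setStar_univ, setStar_univ_eq_univ_of_simple hsimple hJ_nontriv,
      Set.image_univ, Subtype.range_coe]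
  refine stronglyPrime_of_subset_ideals hJ h0J.symm hJJ.ge fun I hI hI0 => ?_
  rcases hclass I hI with h | rfl | rfl
  · exact absurd h hI0
  · exact subset_rfl
  · exact Set.subset_univ J

/-- If a skew left brace `B` has exactly the three (pairwise distinct) ideals `{0}`,
`J`, `B`, and `J` is a simple, non-trivial skew left brace, then `B` is strongly
prime. -/
theorem stronglyPrime_of_unique_simple_ideal {B : Type*} [SkewLeftBrace B]
    (J : Set B) (hJ : IsIdeal J)
    (h0J : ({0} : Set B) ≠ J) (h0U : ({0} : Set B) ≠ Set.univ) (hJU : J ≠ Set.univ)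
    (hclass : ∀ I : Set B, IsIdeal I → I = {0} ∨ I = J ∨ I = Set.univ)
    (hsimple : @SkewLeftBrace.Simple _ hJ.brace)
    (hnontriv : ∃ a ∈ J, ∃ b ∈ J, a * b ≠ a + b) :
    SkewLeftBrace.StronglyPrime B :=
  stronglyPrime_of_unique_simple_ideal_general J hJ h0J hclass hsimple hnontriv
end
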